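/- For a function k on finite configurations with |k(η)| ≤ M C^{|η|} (|η|!)^δ where δ ∈ [0,1), the n-fold Ruelle convolution power satisfies |k^{*n}(η)| ≤ M^n (nC)^{|η|} (|η|!)^δ for all n ∈ ℕ and all finite configurations η. -/

import Mathlib

/-!
Bounds of the form `|f ξ| ≤ a u^|ξ| w(ξ)` propagate through one Ruelle convolution with the
rates adding, `(a, u) * (b, v) ↦ (a b, u + v)`, provided the weight is supermultiplicative along
splittings `η = ξ ⊔ (η \ ξ)`: the binomial identity `∑_{ξ ⊆ η} u^|ξ| v^|η \ ξ| = (u + v)^|η|` does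
the rest. The weight `w(η) = (|η|!)^δ` is supermultiplicative for `δ ≥ 0` because `i! j! ∣ (i + j)!`,
so by induction the rate of `k^{*n}` is `n C`.
-/

open Finset

variable {X : Type*} [DecidableEq X]

/-- Ruelle convolution of functions on finite configurations. -/
noncomputable def conv (G1 G2 : Finset X → ℝ) (η : Finset X) : ℝ :=
  ∑ ξ ∈ η.powerset, G1 ξ * G2 (η \ ξ)

/-- The unit `1^*` for the Ruelle convolution. -/
noncomputable def oneStar (η : Finset X) : ℝ := if η = ∅ then 1 else 0

/-- n-fold Ruelle convolution power. -/
noncomputable def convPow (k : Finset X → ℝ) : ℕ → Finset X → ℝ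
  | 0 => oneStar
  | n + 1 => conv k (convPow k n)

/-- `exp^* u`; a pointwise finite sum when `u ∅ = 0`, since then
`u^{*n}(η) = 0` for `n > |η|`. -/
noncomputable def expStar (u : Finset X → ℝ) (η : Finset X) : ℝ :=
  ∑ n ∈ Finset.range (η.card + 1), ((n.factorial : ℝ))⁻¹ * convPow u n η

/-- `ln^* k`; a pointwise finite sum when `k ∅ = 1`. -/
noncomputable def lnStar (k : Finset X → ℝ) (η : Finset X) : ℝ :=
  ∑ n ∈ Finset.Icc 1 η.card,
    ((-1 : ℝ) ^ (n - 1) / n) * convPow (fun ξ => k ξ - oneStar ξ) n η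

lemma factorial_rpow_mul_factorial_rpow_le {δ : ℝ} (hδ : 0 ≤ δ) (i j : ℕ) :
    (i.factorial : ℝ) ^ δ * (j.factorial : ℝ) ^ δ ≤ ((i + j).factorial : ℝ) ^ δ := by
  rw [← Real.mul_rpow (by positivity) (by positivity)]
  gcongr
  exact_mod_cast
    Nat.le_of_dvd (Nat.factorial_pos _) (Nat.factorial_mul_factorial_dvd_factorial_add i j)

lemma factorial_card_rpow_mul_le {δ : ℝ} (hδ : 0 ≤ δ) {ξ η : Finset X} (hξ : ξ ⊆ η) :
    (ξ.card.factorial : ℝ) ^ δ * ((η \ ξ).card.factorial : ℝ) ^ δ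
      ≤ (η.card.factorial : ℝ) ^ δ := by
  have h := factorial_rpow_mul_factorial_rpow_le hδ ξ.card (η \ ξ).card
  rwa [add_comm, card_sdiff_add_card_eq_card hξ] at h

lemma sum_powerset_pow_mul_pow_sdiff {R : Type*} [CommSemiring R] (u v : R) (η : Finset X) :
    ∑ ξ ∈ η.powerset, u ^ ξ.card * v ^ (η \ ξ).card = (u + v) ^ η.card := by
  rw [← sum_pow_mul_eq_add_pow]
  exact sum_congr rfl fun ξ hξ => by rw [card_sdiff_of_subset (mem_powerset.1 hξ)]

lemma abs_conv_le {f g w : Finset X → ℝ} {a b u v : ℝ} (ha : 0 ≤ a) (hb : 0 ≤ b) (hu : 0 ≤ u)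
    (hv : 0 ≤ v) (hf : ∀ ξ, |f ξ| ≤ a * u ^ ξ.card * w ξ)
    (hg : ∀ ξ, |g ξ| ≤ b * v ^ ξ.card * w ξ) {η : Finset X}
    (hw : ∀ ξ ⊆ η, w ξ * w (η \ ξ) ≤ w η) :
    |conv f g η| ≤ a * b * (u + v) ^ η.card * w η := by
  have hterm : ∀ ξ ∈ η.powerset,
      |f ξ * g (η \ ξ)| ≤ a * b * w η * (u ^ ξ.card * v ^ (η \ ξ).card) := fun ξ hξ =>
    calc |f ξ * g (η \ ξ)|
        ≤ (a * u ^ ξ.card * w ξ) * (b * v ^ (η \ ξ).card * w (η \ ξ)) := by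
          rw [abs_mul]
          exact mul_le_mul (hf ξ) (hg _) (abs_nonneg _) ((abs_nonneg _).trans (hf ξ))
      _ = a * b * (u ^ ξ.card * v ^ (η \ ξ).card) * (w ξ * w (η \ ξ)) := by ring
      _ ≤ a * b * (u ^ ξ.card * v ^ (η \ ξ).card) * w η := by
          gcongr
          exact hw ξ (mem_powerset.1 hξ)
      _ = a * b * w η * (u ^ ξ.card * v ^ (η \ ξ).card) := by ring
  calc |conv f g η|
      ≤ ∑ ξ ∈ η.powerset, |f ξ * g (η \ ξ)| := abs_sum_le_sum_abs _ _
    _ ≤ ∑ ξ ∈ η.powerset, a * b * w η * (u ^ ξ.card * v ^ (η \ ξ).card) := sum_le_sum hterm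
    _ = a * b * (u + v) ^ η.card * w η := by
        rw [← mul_sum, sum_powerset_pow_mul_pow_sdiff]
        ring

theorem convPow_bound_general (k : Finset X → ℝ) (C δ M : ℝ)
    (hC : 0 < C) (hδ0 : 0 ≤ δ)
    (h : ∀ η : Finset X, |k η| ≤ M * C ^ η.card * (η.card.factorial : ℝ) ^ δ) :
    ∀ (n : ℕ) (η : Finset X),
      |convPow k n η| ≤ M ^ n * ((n : ℝ) * C) ^ η.card * (η.card.factorial : ℝ) ^ δ := by
  have hM : 0 ≤ M := by simpa using (abs_nonneg _).trans (h ∅)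
  intro n
  induction n with
  | zero =>
    intro η
    rcases η.eq_empty_or_nonempty with rfl | hη
    · simp [convPow, oneStar]
    · simp [convPow, oneStar, hη.ne_empty, hη.card_ne_zero]
  | succ n ih =>
    intro η
    calc |convPow k (n + 1) η|
        ≤ M * M ^ n * (C + n * C) ^ η.card * (η.card.factorial : ℝ) ^ δ :=
          abs_conv_le hM (pow_nonneg hM n) hC.le (by positivity) h ih
            fun ξ hξ => factorial_card_rpow_mul_le hδ0 hξ
      _ = M ^ (n + 1) * (((n + 1 : ℕ) : ℝ) * C) ^ η.card * (η.card.factorial : ℝ) ^ δ := by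
          push_cast
          ring

theorem convPow_bound (k : Finset X → ℝ) (C δ M : ℝ)
    (hC : 0 < C) (hδ0 : 0 ≤ δ) (hδ1 : δ < 1)
    (h : ∀ η : Finset X, |k η| ≤ M * C ^ η.card * (η.card.factorial : ℝ) ^ δ) :
    ∀ (n : ℕ) (η : Finset X),
      |convPow k n η| ≤ M ^ n * ((n : ℝ) * C) ^ η.card * (η.card.factorial : ℝ) ^ δ :=
  convPow_bound_general k C δ M hC hδ0 h
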